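/- arXiv:1411.3113 — 2 statements merged into one kernel-verified Lean document; each statement's English description precedes it below -/
import Mathlib

section
/- For all u, w ∈ ℝ^J one has the cancellation ⟨B(u, Qw), Qw⟩ = 0. -/
open scoped RealInnerProductSpace

noncomputable section

/-- The Lorenz '96 bilinear map `B` on `ℝ^J`, with cyclic indexing via `ZMod J`:
`B(u,w)^(j) = -(1/2)[w^(j-1)u^(j+1) + u^(j-1)w^(j+1) - w^(j-2)u^(j-1) - u^(j-2)w^(j-1)]`. -/
def L96B {J : ℕ} [NeZero J] (u w : EuclideanSpace ℝ (ZMod J)) :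
    EuclideanSpace ℝ (ZMod J) :=
  WithLp.toLp 2 (fun j => -(1/2 : ℝ) * (w (j - 1) * u (j + 1) + u (j - 1) * w (j + 1)
    - w (j - 2) * u (j - 1) - u (j - 2) * w (j - 1)))

/-- The constant forcing vector `f = (F, ..., F)`. -/
def L96f {J : ℕ} [NeZero J] (F : ℝ) : EuclideanSpace ℝ (ZMod J) := WithLp.toLp 2 (fun _ => F)

/-- `u` solves the Lorenz '96 equation `u' = -u - B(u,u) + f` on the set `I`. -/
def L96Sol {J : ℕ} [NeZero J] (F : ℝ) (I : Set ℝ)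
    (u : ℝ → EuclideanSpace ℝ (ZMod J)) : Prop :=
  ∀ t ∈ I, HasDerivAt u (-u t - L96B (u t) (u t) + L96f F) t

/-- The projection `P` setting to zero every third coordinate
(those with 1-based index `≡ 0 mod 3`, i.e. `ZMod J`-index with value `≡ 0 mod 3`
when `3 ∣ J`). -/
def L96P {J : ℕ} [NeZero J] (u : EuclideanSpace ℝ (ZMod J)) :
    EuclideanSpace ℝ (ZMod J) :=
  WithLp.toLp 2 (fun (j : ZMod J) => if j.val % 3 = 0 then 0 else u j)

/-- The complementary projection `Q = I - P`. -/
def L96Q {J : ℕ} [NeZero J] (u : EuclideanSpace ℝ (ZMod J)) :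
    EuclideanSpace ℝ (ZMod J) :=
  u - L96P u

/-! `Q w` is supported on the indices `≡ 0 mod 3`, while `B(u, Q w)^(j)` only involves `Q w` at
`j - 2`, `j - 1`, `j + 1`, none of which is `≡ 0 mod 3` when `j` is (this is where `3 ∣ J` enters).
So `B(u, Q w)` vanishes on the support of `Q w`. -/

section L96

variable {J : ℕ} [NeZero J]

theorem L96B_apply_eq_zero {u w : EuclideanSpace ℝ (ZMod J)} {j : ZMod J}
    (hm1 : w (j - 1) = 0) (hp1 : w (j + 1) = 0) (hm2 : w (j - 2) = 0) :
    L96B u w j = 0 := by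
  simp [L96B, hm1, hp1, hm2]

theorem inner_L96B_self_eq_zero (u : EuclideanSpace ℝ (ZMod J)) {w : EuclideanSpace ℝ (ZMod J)}
    (hw : ∀ j, w j ≠ 0 → w (j - 1) = 0 ∧ w (j + 1) = 0 ∧ w (j - 2) = 0) :
    ⟪L96B u w, w⟫ = 0 := by
  rw [PiLp.inner_apply]
  refine Finset.sum_eq_zero fun j _ => ?_
  by_cases hj : w j = 0
  · simp [hj]
  · obtain ⟨hm1, hp1, hm2⟩ := hw j hj
    simp [L96B_apply_eq_zero hm1 hp1 hm2]

theorem L96Q_apply (w : EuclideanSpace ℝ (ZMod J)) (j : ZMod J) :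
    L96Q w j = if j.val % 3 = 0 then w j else 0 := by
  by_cases h : j.val % 3 = 0 <;> simp [L96Q, L96P, h]

theorem L96Q_apply_eq_zero_of_castHom_ne_zero (h3 : 3 ∣ J) (w : EuclideanSpace ℝ (ZMod J))
    {j : ZMod J} (hj : ZMod.castHom h3 (ZMod 3) j ≠ 0) : L96Q w j = 0 := by
  have hval : j.val % 3 ≠ 0 := by
    rwa [← ZMod.natCast_zmod_val j, map_natCast, Ne, ZMod.natCast_eq_zero_iff,
      Nat.dvd_iff_mod_eq_zero] at hj
  simp [L96Q_apply, hval]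

end L96

theorem l96_BQ_cancellation_general {J J' : ℕ} [NeZero J] (hJ : J = 3 * J')
    (u w : EuclideanSpace ℝ (ZMod J)) :
    ⟪L96B u (L96Q w), L96Q w⟫ = 0 := by
  have h3 : 3 ∣ J := ⟨J', hJ⟩
  set φ := ZMod.castHom h3 (ZMod 3)
  refine inner_L96B_self_eq_zero u fun j hj => ?_
  have hφj : φ j = 0 := by
    by_contra h
    exact hj (L96Q_apply_eq_zero_of_castHom_ne_zero h3 w h)
  have hφ2 : φ 2 = 2 := map_ofNat φ 2
  refine ⟨?_, ?_, ?_⟩ <;> apply L96Q_apply_eq_zero_of_castHom_ne_zero h3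
  · rw [map_sub, map_one, hφj]; decide
  · rw [map_add, map_one, hφj]; decide
  · rw [map_sub, hφ2, hφj]; decide

/-- the cancellation `⟨B(u, Qw), Qw⟩ = 0`. -/
theorem l96_BQ_cancellation {J J' : ℕ} [NeZero J] (hJ' : 1 ≤ J') (hJ : J = 3 * J')
    (u w : EuclideanSpace ℝ (ZMod J)) :
    ⟪L96B u (L96Q w), L96Q w⟫ = 0 :=
  l96_BQ_cancellation_general hJ u w
end
end

section
/- For all v, δ ∈ ℝ^J one has |⟨B(v,δ), δ⟩| ≤ |v|·|δ|². -/
open scoped RealInnerProductSpace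

noncomputable section

/-!
Summing `B(v,δ)^(j) δ^(j)` over the cycle and shifting indices, the two terms of the form
`v^(k) δ^(k+1) δ^(k+2)` cancel and `⟨B(v,δ), δ⟩` becomes half the difference of the cyclic sums
`∑ v^(j) δ^(j-1) δ^(j+1)` and `∑ v^(j) δ^(j-2) δ^(j-1)`. Each is `⟨v, x y⟩` for two cyclic shifts
`x`, `y` of `δ`, so Cauchy–Schwarz and `‖x y‖ ≤ ‖x‖ ‖y‖` bound it by `‖v‖ ‖δ‖²`.
-/

namespace EuclideanSpace

variable {ι : Type*} [Fintype ι]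

theorem norm_toLp_mul_le (x y : EuclideanSpace ℝ ι) :
    ‖WithLp.toLp 2 (fun i => x i * y i)‖ ≤ ‖x‖ * ‖y‖ := by
  have hy : ∀ i, y i ^ 2 ≤ ‖y‖ ^ 2 := fun i => by
    simpa using pow_le_pow_left₀ (norm_nonneg _) (PiLp.norm_apply_le y i) 2
  refine le_of_sq_le_sq ?_ (by positivity)
  calc ‖WithLp.toLp 2 (fun i => x i * y i)‖ ^ 2 = ∑ i, x i ^ 2 * y i ^ 2 := by
        simp [EuclideanSpace.norm_sq_eq, mul_pow]
    _ ≤ ∑ i, x i ^ 2 * ‖y‖ ^ 2 :=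
        Finset.sum_le_sum fun i _ => mul_le_mul_of_nonneg_left (hy i) (sq_nonneg _)
    _ = (‖x‖ * ‖y‖) ^ 2 := by simp [EuclideanSpace.norm_sq_eq, ← Finset.sum_mul, mul_pow]

theorem abs_sum_mul_mul_le (v x y : EuclideanSpace ℝ ι) :
    |∑ i, v i * x i * y i| ≤ ‖v‖ * ‖x‖ * ‖y‖ := by
  calc |∑ i, v i * x i * y i| = |⟪v, WithLp.toLp 2 (fun i => x i * y i)⟫| := by
        simp [PiLp.inner_apply, mul_assoc, mul_comm]
    _ ≤ ‖v‖ * ‖WithLp.toLp 2 (fun i => x i * y i)‖ := abs_real_inner_le_norm _ _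
    _ ≤ ‖v‖ * ‖x‖ * ‖y‖ := by
        rw [mul_assoc]; gcongr; exact norm_toLp_mul_le x y

theorem abs_sum_mul_comp_mul_comp_le (v x : EuclideanSpace ℝ ι)
    (σ τ : Equiv.Perm ι) :
    |∑ i, v i * x (σ i) * x (τ i)| ≤ ‖v‖ * ‖x‖ ^ 2 := by
  have h := abs_sum_mul_mul_le v (LinearIsometryEquiv.piLpCongrLeft 2 ℝ ℝ σ.symm x)
    (LinearIsometryEquiv.piLpCongrLeft 2 ℝ ℝ τ.symm x)
  simpa [Equiv.piCongrLeft', mul_assoc, sq] using h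

end EuclideanSpace

theorem inner_L96B_self_right_eq {J : ℕ} [NeZero J] (v δ : EuclideanSpace ℝ (ZMod J)) :
    ⟪L96B v δ, δ⟫ = (∑ j, v j * δ (j - 1) * δ (j + 1) - ∑ j, v j * δ (j - 2) * δ (j - 1)) / 2 := by
  have h₁ : ∑ j, δ (j - 1) * v (j + 1) * δ j = ∑ j, v j * δ (j - 2) * δ (j - 1) :=
    Fintype.sum_equiv (Equiv.addRight 1) _ _ fun j => by simp only [Equiv.coe_addRight]; ring_nf
  have h₂ : ∑ j, v (j - 1) * δ (j + 1) * δ j = ∑ j, v j * δ (j + 1) * δ (j + 2) :=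
    Fintype.sum_equiv (Equiv.subRight 1) _ _ fun j => by simp only [Equiv.subRight_apply]; ring_nf
  have h₃ : ∑ j, δ (j - 2) * v (j - 1) * δ j = ∑ j, v j * δ (j - 1) * δ (j + 1) :=
    Fintype.sum_equiv (Equiv.subRight 1) _ _ fun j => by simp only [Equiv.subRight_apply]; ring_nf
  have h₄ : ∑ j, v (j - 2) * δ (j - 1) * δ j = ∑ j, v j * δ (j + 1) * δ (j + 2) :=
    Fintype.sum_equiv (Equiv.subRight 2) _ _ fun j => by simp only [Equiv.subRight_apply]; ring_nf
  have h_expand : ⟪L96B v δ, δ⟫ = -(∑ j, δ (j - 1) * v (j + 1) * δ j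
      + ∑ j, v (j - 1) * δ (j + 1) * δ j - ∑ j, δ (j - 2) * v (j - 1) * δ j
      - ∑ j, v (j - 2) * δ (j - 1) * δ j) / 2 := by
    simp only [PiLp.inner_apply, L96B, RCLike.inner_apply, conj_trivial,
      ← Finset.sum_add_distrib, ← Finset.sum_sub_distrib, ← Finset.sum_neg_distrib, Finset.sum_div]
    exact Finset.sum_congr rfl fun j _ => by ring
  rw [h_expand, h₁, h₂, h₃, h₄]
  ring

theorem l96_Bvdelta_bound_general {J : ℕ} [NeZero J]
    (v δ : EuclideanSpace ℝ (ZMod J)) :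
    |⟪L96B v δ, δ⟫| ≤ ‖v‖ * ‖δ‖ ^ 2 := by
  rw [inner_L96B_self_right_eq, abs_div, abs_two]
  have h₁ :=
    EuclideanSpace.abs_sum_mul_comp_mul_comp_le v δ (Equiv.subRight 1) (Equiv.addRight 1)
  have h₂ :=
    EuclideanSpace.abs_sum_mul_comp_mul_comp_le v δ (Equiv.subRight 2) (Equiv.subRight 1)
  simp only [Equiv.coe_addRight, Equiv.subRight_apply] at h₁ h₂
  linarith [abs_sub (∑ j, v j * δ (j - 1) * δ (j + 1)) (∑ j, v j * δ (j - 2) * δ (j - 1))]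

/-- `|⟨B(v,δ), δ⟩| ≤ |v||δ|²`. -/
theorem l96_Bvdelta_bound {J : ℕ} [NeZero J] (hJ : 3 ≤ J)
    (v δ : EuclideanSpace ℝ (ZMod J)) :
    |⟪L96B v δ, δ⟫| ≤ ‖v‖ * ‖δ‖ ^ 2 :=
  l96_Bvdelta_bound_general v δ
end
end
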